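/- Let u ≢ -∞ be subharmonic on ℂ with Riesz measure Δ_u of finite order a_u := ord[Δ_u^rad] < +∞, let q' ≥ 0 and q := a_u + q' + 3. Let r(z) := (1+|z|)^{-q} and E := {z ∈ ℂ : ∫₀^{r(z)} Δ_u(D̄(z,t))/t dt > 1}. Then E can be covered by countably many disks D(z_k,t_k) with t_k ≤ r(z_k) ≤ 1 and ∑_{|z_k| ≥ R} t_k = O(R^{-q'}) as R → +∞. -/

import Mathlib

open MeasureTheory Filter Metric Set
open scoped ENNReal NNReal

/-- Circular mean `C_v(z,r)` of an extended-real function over the circle of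
center `z` and radius `r` (real-valued; the `-∞` set is null in all uses). -/
noncomputable def cMean (v : ℂ → EReal) (z : ℂ) (r : ℝ) : ℝ :=
  (2 * Real.pi)⁻¹ * ∫ θ in (0 : ℝ)..(2 * Real.pi), (v (z + r * Complex.exp (θ * Complex.I))).toReal

/-- Disk (areal) mean `B_v(z,r)`, with the convention `B_v(z,0) = v(z)`. -/
noncomputable def dMean (v : ℂ → EReal) (z : ℂ) (r : ℝ) : ℝ :=
  if r = 0 then cMean v z 0 else (2 / r ^ 2) * ∫ t in (0 : ℝ)..r, cMean v z t * t

/-- A function is subharmonic on `ℂ`: upper semicontinuous, never `+∞`,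
and satisfies the sub-mean inequality on every circle. -/
def Subharmonic (v : ℂ → EReal) : Prop :=
  UpperSemicontinuous v ∧ (∀ z, v z < ⊤) ∧
    ∀ z : ℂ, ∀ r : ℝ, 0 < r → v z ≤ (cMean v z r : EReal)

/-- Second-order directional Laplacian of a smooth test function on `ℂ`. -/
noncomputable def lap (φ : ℂ → ℝ) (z : ℂ) : ℝ :=
  fderiv ℝ (fun w => fderiv ℝ φ w 1) z 1 +
    fderiv ℝ (fun w => fderiv ℝ φ w Complex.I) z Complex.I

/-- `μ` is the Riesz measure of `u`, i.e. `μ = (1/2π)·Δu` distributionally. -/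
def IsRieszMeasure (u : ℂ → EReal) (μ : Measure ℂ) : Prop :=
  ∀ φ : ℂ → ℝ, ContDiff ℝ (⊤ : ℕ∞) φ → HasCompactSupport φ →
    ∫ z, (u z).toReal * lap φ z = 2 * Real.pi * ∫ z, φ z ∂μ

/-- Positive part of an extended real, as an element of `[0,∞]`. -/
noncomputable def ePos (x : EReal) : ℝ≥0∞ := if x = ⊤ then ⊤ else ENNReal.ofReal x.toReal

/-- The order of growth `ord[m] = limsup_{r→∞} log(1+m⁺(r))/log r ∈ [0,∞]`. -/
noncomputable def ordOf (m : ℝ → EReal) : ℝ≥0∞ :=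
  Filter.limsup (fun r =>
    (if ePos (m r) = ⊤ then (⊤ : ℝ≥0∞)
      else ENNReal.ofReal (Real.log (1 + (ePos (m r)).toReal))) /
        ENNReal.ofReal (Real.log r)) Filter.atTop

/-- The type of growth `type_p[m] = limsup_{r→∞} m⁺(r)/r^p ∈ [0,∞]`. -/
noncomputable def typeOf (p : ℝ) (m : ℝ → EReal) : ℝ≥0∞ :=
  Filter.limsup (fun r => ePos (m r) / ENNReal.ofReal (Real.rpow r p)) Filter.atTop

/-- `log|f|` with the value `-∞` at zeros of `f`. -/
noncomputable def logAbs (f : ℂ → ℂ) (z : ℂ) : EReal :=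
  if f z = 0 then ⊥ else ((Real.log (‖f z‖) : ℝ) : EReal)

/-- The radial maximum function `M_v(r) = sup_{|z| ≤ r} v(z)`. -/
noncomputable def mRad (v : ℂ → EReal) (r : ℝ) : EReal := sSup (v '' Metric.closedBall 0 r)

/-- The exceptional set `E = {z : ∫₀^{r(z)} μ(D̄(z,t))/t dt > 1}`. -/
noncomputable def excSet (r : ℂ → ℝ) (μ : Measure ℂ) : Set ℂ :=
  {z : ℂ | 1 < ∫⁻ t in Set.Ioc 0 (r z), μ (Metric.closedBall z t) / ENNReal.ofReal t}

lemma aux_growth (μ : Measure ℂ) (a : ℝ) (ha0 : 0 ≤ a)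
    (ha : ordOf (fun r => ((μ (Metric.closedBall 0 r) : ℝ≥0∞) : EReal)) = ENNReal.ofReal a) :
    ∃ R₁ : ℝ, 1 ≤ R₁ ∧ (∀ s : ℝ, μ (Metric.closedBall 0 s) ≠ ⊤) ∧
      ∀ s : ℝ, 0 ≤ s → μ (Metric.closedBall 0 s) ≤ ENNReal.ofReal ((s + R₁) ^ (a+1 : ℝ)) := by
  set m : ℝ → ℝ≥0∞ := fun r => μ (Metric.closedBall 0 r) with hm
  set f : ℝ → ℝ≥0∞ := fun r =>
    (if ePos (((m r : ℝ≥0∞) : EReal)) = ⊤ then (⊤ : ℝ≥0∞)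
      else ENNReal.ofReal (Real.log (1 + (ePos (((m r : ℝ≥0∞) : EReal))).toReal))) /
        ENNReal.ofReal (Real.log r) with hf
  have hfeq : ordOf (fun r => ((μ (Metric.closedBall 0 r) : ℝ≥0∞) : EReal)) = Filter.limsup f Filter.atTop := rfl
  -- finiteness
  have hfin : ∀ s : ℝ, m s ≠ ⊤ := by
    intro s hs
    have hev : ∀ᶠ r in atTop, f r = ⊤ := by
      filter_upwards [eventually_ge_atTop (max s 3)] with r hr
      have h1 : m r = ⊤ := by
        refine eq_top_iff.2 (hs ▸ measure_mono (closedBall_subset_closedBall ?_))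
        exact le_trans (le_max_left s 3) hr
      have h2 : ePos (((m r : ℝ≥0∞) : EReal)) = ⊤ := by
        simp [ePos, h1]
      rw [hf]
      simp only [h2, if_pos]
      rw [ENNReal.top_div]
      rw [if_neg (by simp)]
    have : Filter.limsup f Filter.atTop = ⊤ := by
      rw [Filter.limsup_congr hev]; simp
    rw [← hfeq, ha] at this
    exact ENNReal.ofReal_ne_top this
  -- eventual bound
  have hlt : Filter.limsup f Filter.atTop < ENNReal.ofReal (a + 1) := by
    rw [← hfeq, ha]
    rw [ENNReal.ofReal_lt_ofReal_iff (by linarith)]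
    linarith
  have hev := Filter.eventually_lt_of_limsup_lt hlt
  obtain ⟨R₀, hR₀⟩ := (hev.and (eventually_ge_atTop (3:ℝ))).exists_forall_of_atTop
  set R₁ : ℝ := max R₀ 3 with hR₁
  have key : ∀ s ≥ R₁, m s ≤ ENNReal.ofReal (s ^ (a+1:ℝ)) := by
    intro s hsR
    have hs3 : (3:ℝ) ≤ s := le_trans (le_max_right _ _) hsR
    obtain ⟨h1, _⟩ := hR₀ s (le_trans (le_max_left _ _) hsR)
    have hne : ePos (((m s : ℝ≥0∞) : EReal)) ≠ ⊤ := by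
      simp [ePos, EReal.coe_ennreal_eq_top_iff]
      intro h; exact absurd h (hfin s)
    rw [hf] at h1
    simp only [if_neg hne] at h1
    have hePos : (ePos (((m s : ℝ≥0∞) : EReal))).toReal = (m s).toReal := by
      simp [ePos, EReal.coe_ennreal_eq_top_iff, hfin s, EReal.toReal_coe_ennreal,
        ENNReal.toReal_ofReal ENNReal.toReal_nonneg]
    rw [hePos] at h1
    have hlog : (0:ℝ) < Real.log s := Real.log_pos (by linarith)
    rw [ENNReal.div_lt_iff (Or.inl (ne_of_gt (ENNReal.ofReal_pos.2 hlog)))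
      (Or.inl ENNReal.ofReal_ne_top)] at h1
    rw [← ENNReal.ofReal_mul (by linarith)] at h1
    have h2 : Real.log (1 + (m s).toReal) < (a+1) * Real.log s := by
      have := (ENNReal.ofReal_lt_ofReal_iff_of_nonneg
        (Real.log_nonneg (by linarith [ENNReal.toReal_nonneg (a := m s)]))).1 h1
      exact this
    have h3 : 1 + (m s).toReal < s ^ (a+1:ℝ) := by
      rw [Real.rpow_def_of_pos (by linarith)]
      rw [← Real.exp_log (x := 1 + (m s).toReal) (by linarith [ENNReal.toReal_nonneg (a := m s)])]
      exact Real.exp_lt_exp.2 (by linarith [h2])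
    rw [ENNReal.le_ofReal_iff_toReal_le (hfin s) (by positivity)]
    linarith [ENNReal.toReal_nonneg (a := m s)]
  refine ⟨R₁, le_trans (by norm_num) (le_max_right R₀ 3), hfin, fun s hs => ?_⟩
  calc m s ≤ m (s + R₁) := measure_mono (closedBall_subset_closedBall (by linarith [le_max_right R₀ (3:ℝ)]))
    _ ≤ ENNReal.ofReal ((s + R₁) ^ (a+1:ℝ)) := key _ (by linarith)

lemma aux_select (μ : Measure ℂ) (z : ℂ) (r : ℝ) (hr : 0 < r)
    (hz : 1 < ∫⁻ t in Set.Ioc 0 r, μ (Metric.closedBall z t) / ENNReal.ofReal t) :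
    ∃ T, 0 < T ∧ T ≤ r ∧ ENNReal.ofReal T ≤ ENNReal.ofReal r * μ (Metric.closedBall z T) := by
  by_contra h
  push_neg at h
  have hr0 : ENNReal.ofReal r ≠ 0 := ne_of_gt (ENNReal.ofReal_pos.2 hr)
  have hrt : ENNReal.ofReal r ≠ ⊤ := ENNReal.ofReal_ne_top
  have hb : ∀ t ∈ Set.Ioc (0:ℝ) r,
      μ (Metric.closedBall z t) / ENNReal.ofReal t ≤ (ENNReal.ofReal r)⁻¹ := by
    intro t ht
    have h1 := h t ht.1 ht.2
    have ht0 : ENNReal.ofReal t ≠ 0 := ne_of_gt (ENNReal.ofReal_pos.2 ht.1)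
    rw [ENNReal.div_le_iff ht0 ENNReal.ofReal_ne_top]
    calc μ (Metric.closedBall z t) = (ENNReal.ofReal r)⁻¹ * (ENNReal.ofReal r * μ (Metric.closedBall z t)) := by
          rw [← mul_assoc, ENNReal.inv_mul_cancel hr0 hrt, one_mul]
      _ ≤ (ENNReal.ofReal r)⁻¹ * ENNReal.ofReal t := mul_le_mul_right h1.le _
  have h2 : (∫⁻ t in Set.Ioc 0 r, μ (Metric.closedBall z t) / ENNReal.ofReal t) ≤ 1 := by
    calc (∫⁻ t in Set.Ioc 0 r, μ (Metric.closedBall z t) / ENNReal.ofReal t)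
        ≤ ∫⁻ _ in Set.Ioc 0 r, (ENNReal.ofReal r)⁻¹ := setLIntegral_mono' measurableSet_Ioc hb
      _ = (ENNReal.ofReal r)⁻¹ * volume (Set.Ioc (0:ℝ) r) := setLIntegral_const _ _
      _ = 1 := by
          rw [Real.volume_Ioc, sub_zero]
          exact ENNReal.inv_mul_cancel hr0 hrt
  exact absurd hz (not_lt.2 h2)

lemma aux_int (μ : Measure ℂ) (a R₁ : ℝ) (ha0 : 0 ≤ a) (hR₁ : 1 ≤ R₁)
    (hgrow : ∀ s : ℝ, 0 ≤ s → μ (Metric.closedBall 0 s) ≤ ENNReal.ofReal ((s + R₁) ^ (a+1 : ℝ))) :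
    (∫⁻ w, ENNReal.ofReal ((1 + ‖w‖) ^ (-(a+3) : ℝ)) ∂μ) < ⊤ := by
  set g : ℂ → ℝ≥0∞ := fun w => ENNReal.ofReal ((1 + ‖w‖) ^ (-(a+3) : ℝ)) with hg
  set A : ℕ → Set ℂ := fun j => {w : ℂ | (j:ℝ) ≤ ‖w‖ ∧ ‖w‖ < j+1} with hA
  have hAmeas : ∀ j, MeasurableSet (A j) := by
    intro j
    have : A j = (fun w : ℂ => ‖w‖) ⁻¹' (Set.Ico (j:ℝ) (j+1)) := rfl
    rw [this]
    exact continuous_norm.measurable measurableSet_Ico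
  have hunion : (Set.univ : Set ℂ) = ⋃ j, A j := by
    ext w
    simp only [Set.mem_univ, Set.mem_iUnion, true_iff]
    exact ⟨⌊‖w‖⌋₊, Nat.floor_le (norm_nonneg w),
      Nat.lt_floor_add_one _⟩
  have hj : ∀ j : ℕ, (∫⁻ w in A j, g w ∂μ) ≤
      ENNReal.ofReal ((1+R₁) ^ (a+1:ℝ) * (1+(j:ℝ)) ^ (-2:ℝ)) := by
    intro j
    have hb : ∀ w ∈ A j, g w ≤ ENNReal.ofReal ((1+(j:ℝ)) ^ (-(a+3):ℝ)) := by
      intro w hw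
      exact ENNReal.ofReal_le_ofReal
        (Real.rpow_le_rpow_of_nonpos (by positivity) (by linarith [hw.1]) (by linarith))
    calc (∫⁻ w in A j, g w ∂μ) ≤ ∫⁻ _ in A j, ENNReal.ofReal ((1+(j:ℝ)) ^ (-(a+3):ℝ)) ∂μ :=
          setLIntegral_mono' (hAmeas j) hb
      _ = ENNReal.ofReal ((1+(j:ℝ)) ^ (-(a+3):ℝ)) * μ (A j) := setLIntegral_const _ _
      _ ≤ ENNReal.ofReal ((1+(j:ℝ)) ^ (-(a+3):ℝ)) * ENNReal.ofReal (((j:ℝ)+1+R₁) ^ (a+1:ℝ)) := by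
          refine mul_le_mul_right (le_trans (measure_mono ?_) (hgrow ((j:ℝ)+1) (by positivity))) _
          intro w hw
          simp only [Metric.mem_closedBall, Complex.dist_eq, sub_zero]
          exact le_of_lt hw.2
      _ ≤ ENNReal.ofReal ((1+R₁) ^ (a+1:ℝ) * (1+(j:ℝ)) ^ (-2:ℝ)) := by
          rw [← ENNReal.ofReal_mul (by positivity)]
          refine ENNReal.ofReal_le_ofReal ?_
          have h1 : ((j:ℝ)+1+R₁) ^ (a+1:ℝ) ≤ ((1+(j:ℝ)) * (1+R₁)) ^ (a+1:ℝ) := by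
            refine Real.rpow_le_rpow (by positivity) (by nlinarith [Nat.cast_nonneg (α:=ℝ) j]) (by linarith)
          calc (1+(j:ℝ)) ^ (-(a+3):ℝ) * ((j:ℝ)+1+R₁) ^ (a+1:ℝ)
              ≤ (1+(j:ℝ)) ^ (-(a+3):ℝ) * (((1+(j:ℝ)) * (1+R₁)) ^ (a+1:ℝ)) := by
                refine mul_le_mul_of_nonneg_left h1 (by positivity)
            _ = (1+R₁) ^ (a+1:ℝ) * (1+(j:ℝ)) ^ (-2:ℝ) := by
                rw [Real.mul_rpow (by positivity) (by positivity),
                  ← mul_assoc, ← Real.rpow_add (by positivity : (0:ℝ) < 1+(j:ℝ)),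
                  show (-(a+3)) + (a+1) = (-2:ℝ) by ring]
                ring
  have hsum : (∑' j : ℕ, ENNReal.ofReal ((1+R₁) ^ (a+1:ℝ) * (1+(j:ℝ)) ^ (-2:ℝ))) < ⊤ := by
    have hsummable : Summable (fun j : ℕ => (1+R₁) ^ (a+1:ℝ) * (1+(j:ℝ)) ^ (-2:ℝ)) := by
      apply Summable.mul_left
      have h0 : Summable (fun n : ℕ => (n:ℝ) ^ (-2:ℝ)) := Real.summable_nat_rpow.2 (by norm_num)
      have := h0.comp_injective (add_left_injective 1)
      refine this.congr ?_
      intro j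
      simp only [Function.comp]
      norm_num
      rw [add_comm]
    rw [← ENNReal.ofReal_tsum_of_nonneg (fun j => by positivity) hsummable]
    exact ENNReal.ofReal_lt_top
  calc (∫⁻ w, g w ∂μ) = ∫⁻ w in Set.univ, g w ∂μ := (setLIntegral_univ _).symm
    _ = ∫⁻ w in ⋃ j, A j, g w ∂μ := by rw [← hunion]
    _ ≤ ∑' j, ∫⁻ w in A j, g w ∂μ := lintegral_iUnion_le _ _
    _ ≤ ∑' j : ℕ, ENNReal.ofReal ((1+R₁) ^ (a+1:ℝ) * (1+(j:ℝ)) ^ (-2:ℝ)) := ENNReal.tsum_le_tsum hj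
    _ < ⊤ := hsum

set_option maxHeartbeats 1000000 in
/-- for `u` subharmonic with Riesz measure of finite order `a`,
`q := a + q' + 3`, the exceptional set for `r(z) = (1+|z|)^{-q}` is covered by
countably many disks with radii `t_k ≤ r(z_k)` and tails `O(R^{-q'})`. -/
theorem excSet_cover_small_tails (u : ℂ → EReal) (hu : Subharmonic u) (hne : ∃ z, u z ≠ ⊥)
    (μ : Measure ℂ) (hμ : IsRieszMeasure u μ) (a q' : ℝ) (ha0 : 0 ≤ a) (hq' : 0 ≤ q')
    (ha : ordOf (fun r => ((μ (Metric.closedBall 0 r) : ℝ≥0∞) : EReal)) = ENNReal.ofReal a) :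
    ∃ (c : ℕ → ℂ) (t : ℕ → ℝ),
      (∀ k, 0 ≤ t k ∧ t k ≤ Real.rpow (1 + ‖c k‖) (-(a + q' + 3)) ∧
        Real.rpow (1 + ‖c k‖) (-(a + q' + 3)) ≤ 1) ∧
      excSet (fun z => Real.rpow (1 + ‖z‖) (-(a + q' + 3))) μ
        ⊆ ⋃ k, Metric.ball (c k) (t k) ∧
      ∃ C R₀ : ℝ, ∀ R ≥ R₀,
        (∑' k : {k : ℕ // R ≤ ‖c k‖}, ENNReal.ofReal (t ↑k))
          ≤ ENNReal.ofReal (C / Real.rpow R q') := by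
  classical
  have hrpow : ∀ x y : ℝ, Real.rpow x y = x ^ y := fun _ _ => rfl
  set q : ℝ := a + q' + 3 with hq
  have hq0 : (0:ℝ) ≤ q := by simp only [hq]; linarith
  set rz : ℂ → ℝ := fun z => Real.rpow (1 + ‖z‖) (-q) with hrzdef
  have habs : ∀ z : ℂ, (0:ℝ) ≤ ‖z‖ := fun z => norm_nonneg z
  have hrzpos : ∀ z, 0 < rz z := fun z => Real.rpow_pos_of_pos (by linarith [habs z]) _
  have hrz1 : ∀ z, rz z ≤ 1 := fun z =>
    Real.rpow_le_one_of_one_le_of_nonpos (by linarith [habs z]) (by linarith)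
  set E : Set ℂ := excSet rz μ with hE
  obtain ⟨R₁, hR₁1, hfin, hgrow⟩ := aux_growth μ a ha0 ha
  have hsel : ∀ z ∈ E, ∃ T, 0 < T ∧ T ≤ rz z ∧
      ENNReal.ofReal T ≤ ENNReal.ofReal (rz z) * μ (Metric.closedBall z T) := by
    intro z hz
    exact aux_select μ z (rz z) (hrzpos z) hz
  choose! T hT1 hT2 hT3 using hsel
  -- Vitali
  obtain ⟨U, hUE, hUdisj, hUcov⟩ :=
    Vitali.exists_disjoint_subfamily_covering_enlargement_closedBall E id T 1
      (fun z hz => le_trans (hT2 z hz) (hrz1 z)) 4 (by norm_num)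
  have hUc : U.Countable := by
    refine hUdisj.countable_of_nonempty_interior (fun b hb => ?_)
    have h0 : (0:ℝ) < T b := hT1 b (hUE hb)
    simp only [id_eq]
    rw [interior_closedBall _ (ne_of_gt h0)]
    exact ⟨b, mem_ball_self h0⟩
  have : Countable ↥U := hUc.to_subtype
  obtain ⟨e, he⟩ := Countable.exists_injective_nat ↥U
  -- net of the unit ball
  set K : ℝ := Real.rpow 5 q with hK
  have hK1 : (1:ℝ) ≤ K := Real.one_le_rpow (by norm_num) hq0
  have hKpos : (0:ℝ) < K := by linarith
  set ε : ℝ := 1 / (8 * K) with hεdef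
  have hε : 0 < ε := by positivity
  obtain ⟨Fs, hFsub, hFfin, hFcov⟩ :=
    (isCompact_closedBall (0:ℂ) 1).totallyBounded.exists_subset (dist_mem_uniformity hε)
  set L : List ℂ := hFfin.toFinset.toList with hL
  set M := L.length with hM
  have hmemL : ∀ i, i < M → L.getD i 0 ∈ Metric.closedBall (0:ℂ) 1 := by
    intro i hi
    rw [List.getD_eq_getElem L 0 hi]
    refine hFsub (hFfin.mem_toFinset.1 ?_)
    rw [← Finset.mem_toList]
    exact List.getElem_mem _
  have hxabs : ∀ i, i < M → ‖(L.getD i 0)‖ ≤ 1 := by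
    intro i hi
    have := hmemL i hi
    simpa [Complex.dist_eq] using this
  have hnet : ∀ w : ℂ, ‖w‖ ≤ 1 → ∃ i, i < M ∧ dist w (L.getD i 0) < ε := by
    intro w hw
    have hwmem : w ∈ Metric.closedBall (0:ℂ) 1 := by
      simpa [Complex.dist_eq] using hw
    obtain ⟨y, hy, hdy⟩ := Set.mem_iUnion₂.1 (hFcov hwmem)
    have hyL : y ∈ L := by
      rw [hL, Finset.mem_toList]
      exact hFfin.mem_toFinset.2 hy
    obtain ⟨i, hi, hiy⟩ := List.mem_iff_getElem.1 hyL
    refine ⟨i, hi, ?_⟩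
    rw [List.getD_eq_getElem L 0 hi, hiy]
    exact hdy
  -- the ℕ-indexed family
  set P : ℕ → ℂ × ℝ := fun k =>
    if h : (∃ b : ↥U, e b = (Nat.unpair k).1) ∧ (Nat.unpair k).2 < M then
      ((h.1.choose : ℂ) + ((4 * T (h.1.choose : ℂ) : ℝ) : ℂ) * (L.getD (Nat.unpair k).2 0),
        T (h.1.choose : ℂ) / (2 * K))
    else (0, 0) with hP
  have hPpos : ∀ k (h : (∃ b : ↥U, e b = (Nat.unpair k).1) ∧ (Nat.unpair k).2 < M),
      P k = ((h.1.choose : ℂ) + ((4 * T (h.1.choose : ℂ) : ℝ) : ℂ) * (L.getD (Nat.unpair k).2 0),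
        T (h.1.choose : ℂ) / (2 * K)) := fun k h => dif_pos h
  have hPneg : ∀ k, ¬((∃ b : ↥U, e b = (Nat.unpair k).1) ∧ (Nat.unpair k).2 < M) →
      P k = (0, 0) := fun k h => dif_neg h
  have hchoose_mem : ∀ (n : ℕ) (h : ∃ b : ↥U, e b = n), ((h.choose : ↥U) : ℂ) ∈ E :=
    fun n h => hUE h.choose.2
  -- bound on |c k| in the valid case
  have hcabs : ∀ k (h : (∃ b : ↥U, e b = (Nat.unpair k).1) ∧ (Nat.unpair k).2 < M),
      ‖(P k).1‖ ≤ ‖((h.1.choose : ↥U) : ℂ)‖ + 4 := by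
    intro k h
    rw [hPpos k h]
    set bc : ℂ := ((h.1.choose : ↥U) : ℂ) with hbc
    have hbE : bc ∈ E := hchoose_mem _ h.1
    have hTpos := hT1 _ hbE
    have hTb1 : T bc ≤ 1 := le_trans (hT2 _ hbE) (hrz1 _)
    have hx1 : ‖(L.getD (Nat.unpair k).2 0)‖ ≤ 1 := hxabs _ h.2
    refine le_trans (norm_add_le _ _) ?_
    have h2 : ‖(((4 * T bc : ℝ):ℂ) * (L.getD (Nat.unpair k).2 0))‖ ≤ 4 * T bc * 1 := by
      rw [norm_mul, Complex.norm_real, Real.norm_eq_abs, abs_of_pos (by linarith : (0:ℝ) < 4 * T bc)]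
      exact mul_le_mul_of_nonneg_left hx1 (by linarith)
    nlinarith
  refine ⟨fun k => (P k).1, fun k => (P k).2, ?_, ?_, ?_⟩
  · -- part A : radii constraints
    intro k
    refine ⟨?_, ?_, hrz1 ((P k).1)⟩
    · show 0 ≤ (P k).2
      by_cases h : (∃ b : ↥U, e b = (Nat.unpair k).1) ∧ (Nat.unpair k).2 < M
      · rw [hPpos k h]
        have hTpos := hT1 _ (hchoose_mem _ h.1)
        positivity
      · rw [hPneg k h]
    · show (P k).2 ≤ rz (P k).1
      by_cases h : (∃ b : ↥U, e b = (Nat.unpair k).1) ∧ (Nat.unpair k).2 < M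
      · have hck := hcabs k h
        rw [hPpos k h] at hck ⊢
        set bc : ℂ := ((h.1.choose : ↥U) : ℂ) with hbc
        set cc : ℂ := bc + ((4 * T bc : ℝ):ℂ) * (L.getD (Nat.unpair k).2 0) with hcc
        have hbE : bc ∈ E := hchoose_mem _ h.1
        have hTpos := hT1 _ hbE
        have hTle := hT2 _ hbE
        have h5 : (1 : ℝ) + ‖cc‖ ≤ 5 * (1 + ‖bc‖) := by
          have := habs bc
          nlinarith
        have hrzc : rz bc / K ≤ rz cc := by
          have h6 := Real.rpow_le_rpow_of_nonpos
            (x := 1 + ‖cc‖) (y := 5*(1+‖bc‖))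
            (by linarith [habs cc]) h5 (by linarith : -q ≤ 0)
          rw [Real.mul_rpow (by norm_num) (by linarith [habs bc]),
            Real.rpow_neg (by norm_num : (0:ℝ) ≤ 5)] at h6
          calc rz bc / K = (5 ^ q : ℝ)⁻¹ * ((1+‖bc‖) ^ (-q)) := by
                rw [div_eq_inv_mul]; rfl
            _ ≤ rz cc := h6
        calc T bc / (2 * K) ≤ rz bc / (2 * K) := by gcongr
          _ ≤ rz bc / K := by
              apply div_le_div_of_nonneg_left (le_of_lt (hrzpos bc)) hKpos
              linarith
          _ ≤ rz cc := hrzc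
      · rw [hPneg k h]
        simp only
        exact le_of_lt (hrzpos 0)
  · -- part B : covering
    intro z hz
    obtain ⟨b, hbU, hsub⟩ := hUcov z hz
    have hbE : b ∈ E := hUE hbU
    have hTz := hT1 z hz
    have hTb := hT1 b hbE
    have hzb : ‖(z - b)‖ ≤ 4 * T b := by
      have h1 : z ∈ Metric.closedBall (id b) (4 * T b) :=
        hsub (Metric.mem_closedBall_self (le_of_lt hTz))
      simpa [Complex.dist_eq] using h1
    set w : ℂ := (((4 * T b : ℝ))⁻¹ : ℝ) * (z - b) with hw
    have h4T : (4 * T b : ℝ) ≠ 0 := by positivity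
    have hwabs : ‖w‖ ≤ 1 := by
      rw [hw, norm_mul, Complex.norm_real, Real.norm_eq_abs, abs_of_pos (by positivity : (0:ℝ) < (4*T b)⁻¹)]
      rw [inv_mul_le_iff₀ (by positivity)]
      simpa using hzb
    obtain ⟨i, hiM, hdi⟩ := hnet w hwabs
    set n : ℕ := e ⟨b, hbU⟩ with hn
    set k : ℕ := Nat.pair n i with hk
    have hcond : (∃ b' : ↥U, e b' = (Nat.unpair k).1) ∧ (Nat.unpair k).2 < M := by
      rw [hk, Nat.unpair_pair]
      exact ⟨⟨⟨b, hbU⟩, rfl⟩, hiM⟩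
    have hchoose : ((hcond.1.choose : ↥U) : ℂ) = b := by
      have h1 : hcond.1.choose = (⟨b, hbU⟩ : ↥U) := by
        apply he
        rw [hcond.1.choose_spec, hk, Nat.unpair_pair]
      rw [h1]
    have hi2 : (Nat.unpair k).2 = i := by rw [hk, Nat.unpair_pair]
    have hPk := hPpos k hcond
    rw [hchoose, hi2] at hPk
    refine Set.mem_iUnion.2 ⟨k, ?_⟩
    show z ∈ Metric.ball (P k).1 (P k).2
    rw [hPk, Metric.mem_ball, Complex.dist_eq]
    set x : ℂ := L.getD i 0 with hx
    have hzw : z - b = ((4 * T b : ℝ) : ℂ) * w := by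
      rw [hw]
      push_cast
      rw [← mul_assoc, mul_inv_cancel₀ (mul_ne_zero (by norm_num : (4:ℂ) ≠ 0) (Complex.ofReal_ne_zero.2 hTb.ne')), one_mul]
    have hdiff : z - (b + ((4 * T b : ℝ):ℂ) * x) = ((4 * T b : ℝ):ℂ) * (w - x) := by
      rw [mul_sub, ← hzw]; ring
    rw [hdiff, norm_mul, Complex.norm_real, Real.norm_eq_abs, abs_of_pos (by positivity : (0:ℝ) < 4 * T b)]
    have hdwx : ‖(w - x)‖ < ε := by rwa [Complex.dist_eq] at hdi
    calc 4 * T b * ‖(w - x)‖ < 4 * T b * ε :=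
          mul_lt_mul_of_pos_left hdwx (by positivity)
      _ = T b / (2 * K) := by rw [hεdef]; field_simp; ring
  · -- part C : tail bound
    set g : ℂ → ℝ≥0∞ := fun w => ENNReal.ofReal ((1 + ‖w‖) ^ (-(a+3) : ℝ)) with hg
    set I : ℝ≥0∞ := ∫⁻ w, g w ∂μ with hI
    have hIlt : I < ⊤ := aux_int μ a R₁ ha0 hR₁1 hgrow
    set S : ℕ → Set ℂ := fun n =>
      if h : ∃ b : ↥U, e b = n then
        Metric.closedBall ((h.choose : ↥U) : ℂ) (T ((h.choose : ↥U) : ℂ)) else ∅ with hS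
    have hSmeas : ∀ n, MeasurableSet (S n) := by
      intro n
      by_cases h : ∃ b : ↥U, e b = n
      · rw [hS]; simp only [dif_pos h]; exact measurableSet_closedBall
      · rw [hS]; simp only [dif_neg h]; exact MeasurableSet.empty
    have hSdisj : Pairwise (Function.onFun Disjoint S) := by
      intro m n hmn
      by_cases hm : ∃ b : ↥U, e b = m
      · by_cases hn' : ∃ b : ↥U, e b = n
        · have hne' : ((hm.choose : ↥U) : ℂ) ≠ ((hn'.choose : ↥U) : ℂ) := by
            intro hcontra
            apply hmn
            rw [← hm.choose_spec, ← hn'.choose_spec]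
            congr 1
            exact Subtype.ext hcontra
          have := hUdisj hm.choose.2 hn'.choose.2 hne'
          simp only [Function.onFun, id_eq] at this ⊢
          rw [hS]
          simp only [dif_pos hm, dif_pos hn']
          exact this
        · simp only [Function.onFun, hS, dif_neg hn']
          exact Set.disjoint_empty _
      · simp only [Function.onFun, hS, dif_neg hm]
        exact Set.empty_disjoint _
    have hSsum : (∑' n : ℕ, ∫⁻ w in S n, g w ∂μ) ≤ I := by
      rw [← lintegral_iUnion hSmeas hSdisj]
      exact setLIntegral_le_lintegral _ _
    refine ⟨(M:ℝ) * 2 ^ (q':ℝ) * 2 ^ ((a+3):ℝ) * I.toReal, 8, fun R hR => ?_⟩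
    have hR0 : (0:ℝ) < R := by linarith
    have hR3 : (0:ℝ) < R - 3 := by linarith
    set Φ : ℕ → ℝ≥0∞ := fun n =>
      if h : ∃ b : ↥U, e b = n then
        (if R - 4 ≤ ‖((h.choose : ↥U) : ℂ)‖
          then ENNReal.ofReal (T ((h.choose : ↥U) : ℂ)) else 0) else 0 with hΦ
    -- step 3 : Φ n bounded by weighted integral
    have hstep3 : ∀ n, Φ n ≤ ENNReal.ofReal ((R-3) ^ (-q' : ℝ)) *
        (ENNReal.ofReal (2 ^ ((a+3):ℝ)) * ∫⁻ w in S n, g w ∂μ) := by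
      intro n
      by_cases hn' : ∃ b : ↥U, e b = n
      · rw [hΦ]
        simp only [dif_pos hn']
        by_cases htail : R - 4 ≤ ‖((hn'.choose : ↥U) : ℂ)‖
        · rw [if_pos htail]
          set bc : ℂ := ((hn'.choose : ↥U) : ℂ) with hbc
          have hbE : bc ∈ E := hchoose_mem _ hn'
          have hTpos := hT1 _ hbE
          have hTb1 : T bc ≤ 1 := le_trans (hT2 _ hbE) (hrz1 _)
          have hSn : S n = Metric.closedBall bc (T bc) := by rw [hS]; simp only [dif_pos hn']; rfl
          have hsplit : rz bc = (1 + ‖bc‖) ^ (-q' : ℝ) *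
              (1 + ‖bc‖) ^ (-(a+3) : ℝ) := by
            rw [← Real.rpow_add (by linarith [habs bc])]
            show (1 + ‖bc‖) ^ (-q) = _
            congr 1
            rw [hq]; ring
          have hbase : ((1 + ‖bc‖ : ℝ)) ^ (-q' : ℝ) ≤ (R-3) ^ (-q' : ℝ) :=
            Real.rpow_le_rpow_of_nonpos hR3 (by linarith [htail]) (by linarith)
          have hc1 : ENNReal.ofReal (T bc) ≤
              ENNReal.ofReal (rz bc) * μ (Metric.closedBall bc (T bc)) := hT3 _ hbE
          have hc2 : ENNReal.ofReal (rz bc) ≤ ENNReal.ofReal ((R-3) ^ (-q' : ℝ)) *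
              ENNReal.ofReal ((1 + ‖bc‖) ^ (-(a+3) : ℝ)) := by
            rw [← ENNReal.ofReal_mul (by positivity)]
            refine ENNReal.ofReal_le_ofReal ?_
            rw [hsplit]
            exact mul_le_mul_of_nonneg_right hbase (by positivity)
          have hc3 : ENNReal.ofReal ((1 + ‖bc‖) ^ (-(a+3) : ℝ)) *
              μ (Metric.closedBall bc (T bc)) ≤
              ENNReal.ofReal (2 ^ ((a+3):ℝ)) * ∫⁻ w in Metric.closedBall bc (T bc), g w ∂μ := by
            have hpt : ∀ w ∈ Metric.closedBall bc (T bc),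
                ENNReal.ofReal ((1 + ‖bc‖) ^ (-(a+3) : ℝ)) ≤
                  ENNReal.ofReal (2 ^ ((a+3):ℝ)) * g w := by
              intro w hwmem
              have hwb : ‖(w - bc)‖ ≤ T bc := by
                simpa [Complex.dist_eq] using hwmem
              have hwabs : ‖w‖ ≤ ‖bc‖ + 1 := by
                calc ‖w‖ = ‖(bc + (w - bc))‖ := by congr 1; ring
                  _ ≤ ‖bc‖ + ‖(w - bc)‖ := norm_add_le _ _
                  _ ≤ ‖bc‖ + 1 := by linarith
              have hhalf : (1 + ‖w‖) / 2 ≤ 1 + ‖bc‖ := by linarith [habs w]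
              have h7 : ((1 + ‖bc‖ : ℝ)) ^ (-(a+3) : ℝ) ≤
                  ((1 + ‖w‖)/2) ^ (-(a+3) : ℝ) :=
                Real.rpow_le_rpow_of_nonpos (by linarith [habs w]) hhalf (by linarith)
              have h8 : (((1 + ‖w‖)/2 : ℝ)) ^ (-(a+3) : ℝ) =
                  2 ^ ((a+3):ℝ) * (1 + ‖w‖) ^ (-(a+3) : ℝ) := by
                rw [Real.div_rpow (by linarith [habs w]) (by norm_num),
                  Real.rpow_neg (by norm_num : (0:ℝ) ≤ 2), div_eq_mul_inv, inv_inv]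
                ring
              rw [hg, ← ENNReal.ofReal_mul (by positivity)]
              refine ENNReal.ofReal_le_ofReal ?_
              rw [← h8]
              exact h7
            calc ENNReal.ofReal ((1 + ‖bc‖) ^ (-(a+3) : ℝ)) *
                μ (Metric.closedBall bc (T bc))
                = ∫⁻ _ in Metric.closedBall bc (T bc),
                    ENNReal.ofReal ((1 + ‖bc‖) ^ (-(a+3) : ℝ)) ∂μ :=
                  (setLIntegral_const _ _).symm
              _ ≤ ∫⁻ w in Metric.closedBall bc (T bc),
                    ENNReal.ofReal (2 ^ ((a+3):ℝ)) * g w ∂μ :=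
                  setLIntegral_mono' measurableSet_closedBall hpt
              _ = ENNReal.ofReal (2 ^ ((a+3):ℝ)) *
                    ∫⁻ w in Metric.closedBall bc (T bc), g w ∂μ :=
                  lintegral_const_mul' _ _ ENNReal.ofReal_ne_top
          calc ENNReal.ofReal (T bc)
              ≤ ENNReal.ofReal (rz bc) * μ (Metric.closedBall bc (T bc)) := hc1
            _ ≤ (ENNReal.ofReal ((R-3) ^ (-q' : ℝ)) *
                  ENNReal.ofReal ((1 + ‖bc‖) ^ (-(a+3) : ℝ))) *
                  μ (Metric.closedBall bc (T bc)) := mul_le_mul_left hc2 _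
            _ = ENNReal.ofReal ((R-3) ^ (-q' : ℝ)) *
                  (ENNReal.ofReal ((1 + ‖bc‖) ^ (-(a+3) : ℝ)) *
                    μ (Metric.closedBall bc (T bc))) := by ring
            _ ≤ ENNReal.ofReal ((R-3) ^ (-q' : ℝ)) *
                  (ENNReal.ofReal (2 ^ ((a+3):ℝ)) *
                    ∫⁻ w in Metric.closedBall bc (T bc), g w ∂μ) := mul_le_mul_right hc3 _
            _ = ENNReal.ofReal ((R-3) ^ (-q' : ℝ)) *
                  (ENNReal.ofReal (2 ^ ((a+3):ℝ)) * ∫⁻ w in S n, g w ∂μ) := by rw [hSn]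
        · rw [if_neg htail]
          exact bot_le
      · rw [hΦ]
        simp only [dif_neg hn']
        exact bot_le
    -- indicator bound
    set ψ : ℕ → ℝ≥0∞ := fun k =>
      if (Nat.unpair k).2 < M then Φ (Nat.unpair k).1 else 0 with hψ
    have hind : ∀ k : ℕ,
        Set.indicator {k : ℕ | R ≤ ‖((P k).1)‖}
          (fun k => ENNReal.ofReal ((P k).2)) k ≤ ψ k := by
      intro k
      by_cases hk : k ∈ {k : ℕ | R ≤ ‖((P k).1)‖}
      · rw [Set.indicator_of_mem hk]
        have hkR : R ≤ ‖((P k).1)‖ := hk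
        by_cases h : (∃ b : ↥U, e b = (Nat.unpair k).1) ∧ (Nat.unpair k).2 < M
        · have hck := hcabs k h
          have hbtail : R - 4 ≤ ‖((h.1.choose : ↥U) : ℂ)‖ := by linarith
          have hbE : ((h.1.choose : ↥U) : ℂ) ∈ E := hchoose_mem _ h.1
          have hTpos := hT1 _ hbE
          rw [hψ]
          simp only [if_pos h.2]
          rw [hΦ]
          simp only [dif_pos h.1, if_pos hbtail]
          rw [hPpos k h]
          refine ENNReal.ofReal_le_ofReal ?_
          simp only
          refine div_le_self (le_of_lt hTpos) (by linarith)
        · rw [hPneg k h] at hkR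
          simp only [norm_zero] at hkR
          linarith
      · rw [Set.indicator_of_notMem hk]
        exact bot_le
    -- reindex
    have hψsum : (∑' k : ℕ, ψ k) = (M : ℝ≥0∞) * ∑' n : ℕ, Φ n := by
      rw [← Nat.pairEquiv.tsum_eq ψ]
      have hψp : ∀ p : ℕ × ℕ, ψ (Nat.pairEquiv p) = if p.2 < M then Φ p.1 else 0 := by
        intro p
        obtain ⟨n, i⟩ := p
        rw [hψ]
        show (if (Nat.unpair (Nat.pair n i)).2 < M then Φ (Nat.unpair (Nat.pair n i)).1 else 0) = _; rw [Nat.unpair_pair]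
      calc (∑' p : ℕ × ℕ, ψ (Nat.pairEquiv p))
          = ∑' p : ℕ × ℕ, (if p.2 < M then Φ p.1 else 0) := by
            exact tsum_congr hψp
        _ = ∑' n : ℕ, ∑' i : ℕ, (if i < M then Φ n else 0) :=
            ENNReal.tsum_prod (f := fun n i => if i < M then Φ n else 0)
        _ = ∑' n : ℕ, (M : ℝ≥0∞) * Φ n := by
            refine tsum_congr (fun n => ?_)
            rw [tsum_eq_sum (s := Finset.range M) (fun i hi => if_neg (by simpa using hi))]
            rw [Finset.sum_congr rfl (fun i hi => if_pos (Finset.mem_range.1 hi))]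
            rw [Finset.sum_const, Finset.card_range, nsmul_eq_mul]
        _ = (M : ℝ≥0∞) * ∑' n : ℕ, Φ n := ENNReal.tsum_mul_left
    -- assemble
    have hmain : (∑' k : {k : ℕ // R ≤ ‖((P k).1)‖}, ENNReal.ofReal ((P (k:ℕ)).2))
        ≤ (M : ℝ≥0∞) * (ENNReal.ofReal ((R-3) ^ (-q' : ℝ)) *
            (ENNReal.ofReal (2 ^ ((a+3):ℝ)) * I)) := by
      calc (∑' k : {k : ℕ // R ≤ ‖((P k).1)‖}, ENNReal.ofReal ((P (k:ℕ)).2))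
          = ∑' k : ℕ, Set.indicator {k : ℕ | R ≤ ‖((P k).1)‖}
              (fun k => ENNReal.ofReal ((P k).2)) k := by
            exact tsum_subtype {k : ℕ | R ≤ ‖((P k).1)‖}
              (fun k => ENNReal.ofReal ((P k).2))
        _ ≤ ∑' k : ℕ, ψ k := ENNReal.tsum_le_tsum hind
        _ = (M : ℝ≥0∞) * ∑' n : ℕ, Φ n := hψsum
        _ ≤ (M : ℝ≥0∞) * ∑' n : ℕ, (ENNReal.ofReal ((R-3) ^ (-q' : ℝ)) *
              (ENNReal.ofReal (2 ^ ((a+3):ℝ)) * ∫⁻ w in S n, g w ∂μ)) :=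
            mul_le_mul_right (ENNReal.tsum_le_tsum hstep3) _
        _ = (M : ℝ≥0∞) * (ENNReal.ofReal ((R-3) ^ (-q' : ℝ)) *
              (ENNReal.ofReal (2 ^ ((a+3):ℝ)) * ∑' n : ℕ, ∫⁻ w in S n, g w ∂μ)) := by
            congr 1
            rw [ENNReal.tsum_mul_left, ENNReal.tsum_mul_left]
        _ ≤ (M : ℝ≥0∞) * (ENNReal.ofReal ((R-3) ^ (-q' : ℝ)) *
              (ENNReal.ofReal (2 ^ ((a+3):ℝ)) * I)) := by
            exact mul_le_mul_right (mul_le_mul_right (mul_le_mul_right hSsum _) _) _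
    refine le_trans hmain ?_
    -- numeric estimate
    have hRq : (0:ℝ) < R ^ (q' : ℝ) := Real.rpow_pos_of_pos hR0 _
    have hstep : ((R-3:ℝ)) ^ (-q' : ℝ) ≤ 2 ^ (q':ℝ) * (R ^ (q':ℝ))⁻¹ := by
      have h1 : ((R-3:ℝ)) ^ (-q' : ℝ) ≤ (R/2) ^ (-q' : ℝ) :=
        Real.rpow_le_rpow_of_nonpos (by linarith) (by linarith) (by linarith)
      have h2 : ((R/2:ℝ)) ^ (-q' : ℝ) = 2 ^ (q':ℝ) * (R ^ (q':ℝ))⁻¹ := by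
        rw [Real.rpow_neg (by linarith), Real.div_rpow (by linarith) (by norm_num)]
        rw [div_eq_mul_inv, mul_inv, inv_inv]
        ring
      linarith [h1, h2.le, h2.ge]
    have hIne : I ≠ ⊤ := hIlt.ne
    set J : ℝ := I.toReal with hJ
    have hJ0 : (0:ℝ) ≤ J := by rw [hJ]; exact ENNReal.toReal_nonneg
    have htoReal : I = ENNReal.ofReal J := by rw [hJ]; exact (ENNReal.ofReal_toReal hIne).symm
    calc (M : ℝ≥0∞) * (ENNReal.ofReal ((R-3) ^ (-q' : ℝ)) *
            (ENNReal.ofReal (2 ^ ((a+3):ℝ)) * I))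
        = ENNReal.ofReal ((M:ℝ) * ((R-3) ^ (-q' : ℝ) * (2 ^ ((a+3):ℝ) * J))) := by
          rw [htoReal]
          rw [ENNReal.ofReal_mul (by positivity), ENNReal.ofReal_mul (by positivity),
            ENNReal.ofReal_mul (by positivity)]
          rw [ENNReal.ofReal_natCast]
      _ ≤ ENNReal.ofReal (((M:ℝ) * 2 ^ (q':ℝ) * 2 ^ ((a+3):ℝ) * J) / R ^ (q' : ℝ)) := by
          refine ENNReal.ofReal_le_ofReal ?_
          have hM0 : (0:ℝ) ≤ (M:ℝ) := Nat.cast_nonneg M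
          have hI0 : (0:ℝ) ≤ J := hJ0
          calc (M:ℝ) * ((R-3) ^ (-q' : ℝ) * (2 ^ ((a+3):ℝ) * J))
              ≤ (M:ℝ) * ((2 ^ (q':ℝ) * (R ^ (q':ℝ))⁻¹) * (2 ^ ((a+3):ℝ) * J)) := by
                refine mul_le_mul_of_nonneg_left (mul_le_mul_of_nonneg_right hstep ?_) hM0
                positivity
            _ = ((M:ℝ) * 2 ^ (q':ℝ) * 2 ^ ((a+3):ℝ) * J) / R ^ (q' : ℝ) := by
                field_simp
      _ = ENNReal.ofReal (((M:ℝ) * 2 ^ (q':ℝ) * 2 ^ ((a+3):ℝ) * J) / Real.rpow R q') := rfl
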